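/- Define Q₁ = (1/√2)(a₋Π₁ + Π₁a₊) with Π₁ = (1/2)(1-R). Then ψ⁽¹⁾_{n,ε} = (1/2)(ψ_{2n} + ε ψ_{2n+1}), ε = ±1, satisfies Q₁ ψ⁽¹⁾_{n,ε} = ε√(n+1/2) ψ⁽¹⁾_{n,ε}. -/

import Mathlib

/-!
Π₁ = (1 - R)/2 annihilates the even Hermite functions and fixes the odd ones, so Q₁ maps
ψ_{2n} to (√2)⁻¹ a₊ψ_{2n} and ψ_{2n+1} to (√2)⁻¹ a₋ψ_{2n+1}. Both ladder coefficients are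
√(2n+1) = √2 · √(n + 1/2), hence Q₁ swaps ψ_{2n} and ψ_{2n+1} up to the factor √(n + 1/2),
and ψ_{2n} + εψ_{2n+1} with ε² = 1 is an eigenvector with eigenvalue ε√(n + 1/2).
-/

lemma Real.sqrt_two_mul_add_one (x : ℝ) :
    Real.sqrt (2 * x + 1) = Real.sqrt 2 * Real.sqrt (x + 1 / 2) := by
  rw [← Real.sqrt_mul zero_le_two]
  ring_nf

lemma LinearMap.map_smul_add_smul_of_swap {K V : Type*} [CommRing K] [AddCommGroup V]
    [Module K V] (f : Module.End K V) {e o : V} {s ε : K} (he : f e = s • o) (ho : f o = s • e)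
    (hε : ε * ε = 1) (c : K) :
    f (c • (e + ε • o)) = (ε * s) • (c • (e + ε • o)) := by
  rw [map_smul, map_add, map_smul, he, ho]
  match_scalars
  · linear_combination (-(c * s)) * hε
  · ring

section HermiteLadder

variable {V : Type*} [AddCommGroup V] [Module ℝ V] {ψ : ℕ → V}

lemma half_one_sub_reflection_apply_even {R : Module.End ℝ V}
    (hR : ∀ n : ℕ, R (ψ n) = ((-1 : ℝ)) ^ n • ψ n) (k : ℕ) :
    ((1 / 2 : ℝ) • (1 - R)) (ψ (2 * k)) = 0 := by
  simp [LinearMap.sub_apply, hR, pow_mul]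

lemma half_one_sub_reflection_apply_odd {R : Module.End ℝ V}
    (hR : ∀ n : ℕ, R (ψ n) = ((-1 : ℝ)) ^ n • ψ n) (k : ℕ) :
    ((1 / 2 : ℝ) • (1 - R)) (ψ (2 * k + 1)) = ψ (2 * k + 1) := by
  simp only [LinearMap.smul_apply, LinearMap.sub_apply, Module.End.one_apply, hR, pow_succ,
    pow_mul]
  module

variable {am ap P : Module.End ℝ V}
  (hP_even : ∀ k : ℕ, P (ψ (2 * k)) = 0) (hP_odd : ∀ k : ℕ, P (ψ (2 * k + 1)) = ψ (2 * k + 1))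
include hP_even hP_odd

lemma supercharge_apply_even (hap : ∀ n : ℕ, ap (ψ n) = Real.sqrt (n + 1) • ψ (n + 1))
    (n : ℕ) :
    ((Real.sqrt 2)⁻¹ • (am * P + P * ap)) (ψ (2 * n))
      = Real.sqrt ((n : ℝ) + 1 / 2) • ψ (2 * n + 1) := by
  simp only [LinearMap.smul_apply, LinearMap.add_apply, Module.End.mul_apply, hP_even, hap,
    map_zero, map_smul, hP_odd, zero_add, smul_smul]
  push_cast
  rw [Real.sqrt_two_mul_add_one, ← mul_assoc, inv_mul_cancel₀ (by positivity), one_mul]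

lemma supercharge_apply_odd (ham : ∀ n : ℕ, am (ψ n) = Real.sqrt n • ψ (n - 1))
    (hap : ∀ n : ℕ, ap (ψ n) = Real.sqrt (n + 1) • ψ (n + 1)) (n : ℕ) :
    ((Real.sqrt 2)⁻¹ • (am * P + P * ap)) (ψ (2 * n + 1))
      = Real.sqrt ((n : ℝ) + 1 / 2) • ψ (2 * n) := by
  have hP_next : P (ψ (2 * n + 1 + 1)) = 0 := hP_even (n + 1)
  simp only [LinearMap.smul_apply, LinearMap.add_apply, Module.End.mul_apply, hP_odd, ham, hap,
    map_smul, hP_next, smul_zero, add_zero, smul_smul, Nat.add_sub_cancel]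
  push_cast
  rw [Real.sqrt_two_mul_add_one, ← mul_assoc, inv_mul_cancel₀ (by positivity), one_mul]

end HermiteLadder

theorem stmt_5 {V : Type*} [AddCommGroup V] [Module ℝ V]
    (ψ : ℕ → V) (am ap R : Module.End ℝ V)
    (ham : ∀ n : ℕ, am (ψ n) = Real.sqrt n • ψ (n - 1))
    (hap : ∀ n : ℕ, ap (ψ n) = Real.sqrt (n + 1) • ψ (n + 1))
    (hR : ∀ n : ℕ, R (ψ n) = ((-1 : ℝ)) ^ n • ψ n)
    (Pi1 : Module.End ℝ V) (hPi1 : Pi1 = (1/2 : ℝ) • (1 - R))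
    (Q1 : Module.End ℝ V) (hQ1 : Q1 = (Real.sqrt 2)⁻¹ • (am * Pi1 + Pi1 * ap))
    (n : ℕ) (ε : ℝ) (hε : ε = 1 ∨ ε = -1) :
    Q1 ((1/2 : ℝ) • (ψ (2 * n) + ε • ψ (2 * n + 1)))
      = (ε * Real.sqrt ((n : ℝ) + 1/2)) • ((1/2 : ℝ) • (ψ (2 * n) + ε • ψ (2 * n + 1))) := by
  have hP_even : ∀ k : ℕ, Pi1 (ψ (2 * k)) = 0 :=
    hPi1 ▸ half_one_sub_reflection_apply_even hR
  have hP_odd : ∀ k : ℕ, Pi1 (ψ (2 * k + 1)) = ψ (2 * k + 1) :=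
    hPi1 ▸ half_one_sub_reflection_apply_odd hR
  have hε_sq : ε * ε = 1 := by rcases hε with rfl | rfl <;> norm_num
  subst hQ1
  exact LinearMap.map_smul_add_smul_of_swap _ (supercharge_apply_even hP_even hP_odd hap n)
    (supercharge_apply_odd hP_even hP_odd ham hap n) hε_sq _
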